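/- arXiv:2411.19165 — 3 statements merged into one kernel-verified Lean document; each statement's English description precedes it below -/
import Mathlib

section
/- Let m ≥ 1 be a natural number, −1 ≤ c₁ < c₂ ≤ 1, and 0 ≤ δ < 1. Define, for z ∈ ℂ with z ≠ 0, P̂(z) = z^m · T_m( (z + z⁻¹ − 2c₁)/((1−δ)(c₂−c₁)) − 1 ), where T_m is the degree-m Chebyshev polynomial of the first kind. Then |P̂(exp(i·arccos(c₂)))| ≥ (1/2) · exp(2·m·√δ) · |P̂(exp(iθ))| for every θ ∈ ℝ with cos θ ∈ [c₁, c₂ − δ(c₂−c₁)]. -/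
/-! On the unit circle `z = e^{iφ}` we have `|z^m| = 1` and `z + z⁻¹ = 2 cos φ`, so `|P̂(e^{iφ})|`
is `|T_m|` at an affine image of `cos φ`. The affine map sends `[c₁, c₂ − δ(c₂ − c₁)]` onto
`[-1, 1]`, where `|T_m| ≤ 1`, and sends `c₂` to `(1 + δ)/(1 − δ) = cosh (2 artanh √δ)`, where
`T_m = cosh (2m artanh √δ) ≥ exp (2m √δ) / 2` because `artanh s ≥ s` for `s ≥ 0`. -/

/-- The polynomial-type function `P̂(z) = z^m · T_m((z + z⁻¹ − 2c₁)/((1−δ)(c₂−c₁)) − 1)`,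
where `T_m` is the degree-`m` Chebyshev polynomial of the first kind. -/
noncomputable def Phat (m : ℕ) (c₁ c₂ δ : ℝ) (z : ℂ) : ℂ :=
  z ^ m * (Polynomial.Chebyshev.T ℂ m).eval
    ((z + z⁻¹ - 2 * (c₁ : ℂ)) / ((1 - (δ : ℂ)) * ((c₂ : ℂ) - (c₁ : ℂ))) - 1)

open Real Polynomial Polynomial.Chebyshev

namespace Real

theorem self_le_artanh {x : ℝ} (hx₀ : 0 ≤ x) (hx₁ : x < 1) : x ≤ artanh x := by
  have hx : |x| < 1 := abs_lt.2 ⟨by linarith, hx₁⟩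
  have hsum := hasSum_log_sub_log_of_abs_lt_one hx
  have hfirst := le_hasSum hsum 0 fun k _ ↦ by positivity
  rw [artanh_eq_half_log ⟨by linarith, hx₁.le⟩, log_div (by linarith) (by linarith)]
  simp only [CharP.cast_eq_zero, mul_zero, zero_add, div_one, mul_one, pow_one] at hfirst
  linarith

theorem cosh_two_mul_artanh {x : ℝ} (hx : x ∈ Set.Ioo (-1) 1) :
    cosh (2 * artanh x) = (1 + x ^ 2) / (1 - x ^ 2) := by
  have hpos : 0 < 1 - x ^ 2 := by nlinarith [hx.1, hx.2]
  rw [cosh_two_mul, cosh_artanh hx, sinh_artanh hx, div_pow, div_pow, sq_sqrt hpos.le]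
  field_simp

theorem exp_le_two_mul_cosh (x : ℝ) : exp x ≤ 2 * cosh x := by
  rw [cosh_eq]
  linarith [exp_pos (-x)]

end Real

theorem exp_two_mul_le_two_mul_eval_T {s : ℝ} (hs₀ : 0 ≤ s) (hs₁ : s < 1) (n : ℕ) :
    exp (2 * n * s) ≤ 2 * (T ℝ n).eval ((1 + s ^ 2) / (1 - s ^ 2)) := by
  rw [← cosh_two_mul_artanh ⟨by linarith, hs₁⟩, T_real_cosh]
  calc exp (2 * n * s) ≤ exp ((n : ℤ) * (2 * artanh s)) := by
        refine exp_le_exp.2 ?_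
        push_cast
        nlinarith [self_le_artanh hs₀ hs₁, (Nat.cast_nonneg n : (0 : ℝ) ≤ n)]
    _ ≤ 2 * cosh ((n : ℤ) * (2 * artanh s)) := exp_le_two_mul_cosh _

theorem abs_two_mul_sub_div_sub_one_le_one {a u L : ℝ} (hL : 0 < L) (h₀ : a ≤ u)
    (h₁ : u - a ≤ L) : |(2 * u - 2 * a) / L - 1| ≤ 1 := by
  have hlo : 0 ≤ (2 * u - 2 * a) / L := div_nonneg (by linarith) hL.le
  have hhi : (2 * u - 2 * a) / L ≤ 2 := (div_le_iff₀ hL).2 (by linarith)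
  exact abs_le.2 ⟨by linarith, by linarith⟩

theorem norm_Phat_exp_mul_I (m : ℕ) (c₁ c₂ δ φ : ℝ) :
    ‖Phat m c₁ c₂ δ (Complex.exp (φ * Complex.I))‖ =
      |(T ℝ m).eval ((2 * cos φ - 2 * c₁) / ((1 - δ) * (c₂ - c₁)) - 1)| := by
  have hsum :
      Complex.exp (φ * Complex.I) + (Complex.exp (φ * Complex.I))⁻¹ = 2 * (cos φ : ℂ) := by
    rw [← Complex.exp_neg, Complex.ofReal_cos, ← neg_mul, Complex.two_cos]
  have harg : (2 * (cos φ : ℂ) - 2 * c₁) / ((1 - δ) * (c₂ - c₁)) - 1 =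
      (((2 * cos φ - 2 * c₁) / ((1 - δ) * (c₂ - c₁)) - 1 : ℝ) : ℂ) := by
    push_cast; ring
  rw [Phat, hsum, harg, ← complex_ofReal_eval_T, norm_mul, norm_pow,
    Complex.norm_exp_ofReal_mul_I, one_pow, one_mul, Complex.norm_real, Real.norm_eq_abs]

theorem circle_poly_remez_general (m : ℕ) (c₁ c₂ : ℝ) (hc₁ : -1 ≤ c₁) (hc : c₁ < c₂)
    (hc₂ : c₂ ≤ 1) (δ : ℝ) (hδ0 : 0 ≤ δ) (hδ1 : δ < 1) (θ : ℝ)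
    (hθ : Real.cos θ ∈ Set.Icc c₁ (c₂ - δ * (c₂ - c₁))) :
    (1 / 2) * Real.exp (2 * m * Real.sqrt δ) *
        ‖Phat m c₁ c₂ δ (Complex.exp (θ * Complex.I))‖ ≤
      ‖Phat m c₁ c₂ δ (Complex.exp ((Real.arccos c₂ : ℂ) * Complex.I))‖ := by
  have hL : 0 < (1 - δ) * (c₂ - c₁) := mul_pos (by linarith) (by linarith)
  have hθ_bound : |(T ℝ m).eval ((2 * cos θ - 2 * c₁) / ((1 - δ) * (c₂ - c₁)) - 1)| ≤ 1 :=
    abs_eval_T_real_le_one m (abs_two_mul_sub_div_sub_one_le_one hL hθ.1 (by linarith [hθ.2]))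
  have hc₂_image :
      (2 * c₂ - 2 * c₁) / ((1 - δ) * (c₂ - c₁)) - 1 = (1 + √δ ^ 2) / (1 - √δ ^ 2) := by
    rw [sq_sqrt hδ0]
    field_simp [(by linarith : (1 : ℝ) - δ ≠ 0), (by linarith : c₂ - c₁ ≠ 0)]
    ring
  have hgrowth := exp_two_mul_le_two_mul_eval_T (sqrt_nonneg δ)
    ((sqrt_lt' one_pos).2 (by linarith)) m
  rw [norm_Phat_exp_mul_I, norm_Phat_exp_mul_I, cos_arccos (by linarith) hc₂, hc₂_image]
  calc 1 / 2 * exp (2 * m * √δ) * |(T ℝ m).eval _|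
      ≤ 1 / 2 * exp (2 * m * √δ) * 1 := by gcongr
    _ ≤ (T ℝ m).eval ((1 + √δ ^ 2) / (1 - √δ ^ 2)) := by linarith
    _ ≤ _ := le_abs_self _

/-- For `m ≥ 1`, `−1 ≤ c₁ < c₂ ≤ 1` and `0 ≤ δ < 1`, the function `P̂`
satisfies `|P̂(e^{i·arccos c₂})| ≥ (1/2)·exp(2m√δ)·|P̂(e^{iθ})|` for every `θ` with
`cos θ ∈ [c₁, c₂ − δ(c₂−c₁)]`. -/
theorem circle_poly_remez (m : ℕ) (hm : 1 ≤ m) (c₁ c₂ : ℝ) (hc₁ : -1 ≤ c₁) (hc : c₁ < c₂)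
    (hc₂ : c₂ ≤ 1) (δ : ℝ) (hδ0 : 0 ≤ δ) (hδ1 : δ < 1) (θ : ℝ)
    (hθ : Real.cos θ ∈ Set.Icc c₁ (c₂ - δ * (c₂ - c₁))) :
    (1 / 2) * Real.exp (2 * m * Real.sqrt δ) *
        ‖Phat m c₁ c₂ δ (Complex.exp (θ * Complex.I))‖ ≤
      ‖Phat m c₁ c₂ δ (Complex.exp ((Real.arccos c₂ : ℂ) * Complex.I))‖ :=
  circle_poly_remez_general m c₁ c₂ hc₁ hc hc₂ δ hδ0 hδ1 θ hθ
end

section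
/- Let k and n be natural numbers with 1 ≤ k < n. Then ∑_{j=1}^{n} j^{k+1} < (n − 1/(e+1)) · ∑_{j=1}^{n} j^{k}, where e is Euler's number. -/
/-! Write `n = m + 1` and `S = ∑ j^k`. Bounding `j ≤ m` in every term but the last gives
`∑ j^(k+1) ≤ m S + (m+1)^k`, so it suffices that `(m+1)^k < e S / (e+1)`. Since
`S ≥ (m+1)^k + m^k`, this follows from `(m+1)^k < e m^k`, i.e. `(1 + 1/m)^k < e^(k/m) ≤ e`
for `k ≤ m`. -/

open Finset Real

lemma sum_Icc_pow_succ_le (k m : ℕ) :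
    ∑ j ∈ Icc 1 (m + 1), (j : ℝ) ^ (k + 1) ≤
      m * ∑ j ∈ Icc 1 (m + 1), (j : ℝ) ^ k + ((m : ℝ) + 1) ^ k := by
  have hlow : ∑ j ∈ Icc 1 m, (j : ℝ) ^ (k + 1) ≤ m * ∑ j ∈ Icc 1 m, (j : ℝ) ^ k := by
    rw [mul_sum]
    refine sum_le_sum fun j hj => ?_
    have hjm : (j : ℝ) ≤ m := by exact_mod_cast (mem_Icc.mp hj).2
    rw [pow_succ']
    exact mul_le_mul_of_nonneg_right hjm (by positivity)
  rw [sum_Icc_succ_top (by omega), sum_Icc_succ_top (by omega)]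
  push_cast
  linear_combination hlow

lemma add_pow_le_sum_Icc_pow (k : ℕ) {m : ℕ} (hm : 1 ≤ m) :
    ((m : ℝ) + 1) ^ k + (m : ℝ) ^ k ≤ ∑ j ∈ Icc 1 (m + 1), (j : ℝ) ^ k := by
  have hmem : m ∈ Icc 1 m := mem_Icc.mpr ⟨hm, le_rfl⟩
  rw [sum_Icc_succ_top (by omega), add_comm]
  push_cast
  gcongr
  exact single_le_sum (f := fun j : ℕ => (j : ℝ) ^ k) (fun _ _ => by positivity) hmem

lemma add_one_pow_lt_exp_one_mul_pow {m : ℝ} (hm : 0 < m) {k : ℕ} (hkm : (k : ℝ) ≤ m) :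
    (m + 1) ^ k < exp 1 * m ^ k := by
  rcases k.eq_zero_or_pos with rfl | hk
  · simp
  calc (m + 1) ^ k = (1 / m + 1) ^ k * m ^ k := by rw [← mul_pow]; field_simp; ring
    _ < exp (1 / m) ^ k * m ^ k := by
        gcongr
        exact add_one_lt_exp (by positivity)
    _ = exp (k / m) * m ^ k := by rw [← exp_nat_mul]; ring_nf
    _ ≤ exp 1 * m ^ k := by
        gcongr
        exact (div_le_one hm).mpr hkm

/-- For natural numbers `1 ≤ k < n`,
`∑_{j=1}^{n} j^{k+1} < (n − 1/(e+1)) · ∑_{j=1}^{n} j^{k}`. -/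
theorem power_sum_lt (k n : ℕ) (hk : 1 ≤ k) (hkn : k < n) :
    (∑ j ∈ Finset.Icc 1 n, (j : ℝ) ^ (k + 1)) <
      ((n : ℝ) - 1 / (Real.exp 1 + 1)) * ∑ j ∈ Finset.Icc 1 n, (j : ℝ) ^ k := by
  obtain ⟨m, rfl⟩ : ∃ m, n = m + 1 := ⟨n - 1, by omega⟩
  set S := ∑ j ∈ Icc 1 (m + 1), (j : ℝ) ^ k
  have hm : (0 : ℝ) < m := by exact_mod_cast (show 0 < m by omega)
  have hkm : (k : ℝ) ≤ m := by exact_mod_cast (show k ≤ m by omega)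
  have hS := add_pow_le_sum_Icc_pow k (show 1 ≤ m by omega)
  have hexp := add_one_pow_lt_exp_one_mul_pow hm hkm
  have he : 0 < exp 1 := exp_pos 1
  have hlast : ((m : ℝ) + 1) ^ k < exp 1 * S / (exp 1 + 1) := by
    rw [lt_div_iff₀ (by positivity)]
    linarith [mul_le_mul_of_nonneg_left hS he.le]
  calc ∑ j ∈ Icc 1 (m + 1), (j : ℝ) ^ (k + 1) ≤ m * S + ((m : ℝ) + 1) ^ k :=
        sum_Icc_pow_succ_le k m
    _ < m * S + exp 1 * S / (exp 1 + 1) := by gcongr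
    _ = ((↑(m + 1) : ℝ) - 1 / (exp 1 + 1)) * S := by push_cast; field_simp; ring
end

section
/- Let m ≥ n ≥ 1, let V ∈ ℂ^{m×n} satisfy V*V = I_n, and let D ∈ ℂ^{m×m} be a diagonal matrix with ‖D‖₂ < 1. Let Q ∈ ℂ^{m×n} be the orthonormal polar factor of (I+D)V, i.e., Q*Q = I_n and QH = (I+D)V for some Hermitian positive semidefinite H ∈ ℂ^{n×n}. Then for every A ∈ ℂ^{m×m}, ‖V*AV − Q*AQ‖₂ ≤ 4‖A‖₂‖D‖₂ / (1 − ‖D‖₂). -/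
/-!
Write `δ = ‖D‖`. Since `Q` is an isometry, `‖Hx‖ = ‖(1 + D)Vx‖` lies within `δ‖x‖` of
`‖x‖ = ‖Vx‖`; applied to unit eigenvectors this puts the spectrum of the positive semidefinite `H`
in `[1 - δ, 1 + δ]`, so `‖H - 1‖ ≤ δ`. Then `(V - Q)H = V(H - 1) - DV` gives
`V - Q = V(H - 1) - DV + (V - Q)(1 - H)`, whence `(1 - δ)‖V - Q‖ ≤ 2δ`. Finally
`V*AV - Q*AQ = V*A(V - Q) + (V - Q)*AQ` has norm at most `2‖A‖‖V - Q‖`.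
-/

open Matrix
open scoped ComplexOrder

/-- The spectral (ℓ² operator) norm of a complex matrix. -/
noncomputable def specNorm {m n : ℕ} (M : Matrix (Fin m) (Fin n) ℂ) : ℝ :=
  ‖LinearMap.toContinuousLinearMap (Matrix.toEuclideanLin M)‖

open scoped Matrix.Norms.L2Operator

namespace Matrix

variable {𝕜 : Type*} [RCLike 𝕜] {m n : Type*} [Fintype m] [Fintype n] [DecidableEq n]

theorem norm_toEuclideanLin_of_conjTranspose_mul_self_eq_one {W : Matrix m n 𝕜}
    (hW : Wᴴ * W = 1) (x : EuclideanSpace 𝕜 n) : ‖toEuclideanLin W x‖ = ‖x‖ := by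
  classical
  have h : ‖toEuclideanLin W x‖ ^ 2 = ‖x‖ ^ 2 := by
    rw [← inner_self_eq_norm_sq (𝕜 := 𝕜), ← inner_self_eq_norm_sq (𝕜 := 𝕜),
      ← LinearMap.adjoint_inner_right, ← toEuclideanLin_conjTranspose_eq_adjoint,
      ← LinearMap.comp_apply, ← toLpLin_mul_same, hW, toLpLin_one, LinearMap.id_apply]
  exact (sq_eq_sq₀ (norm_nonneg _) (norm_nonneg _)).1 h

theorem l2_opNorm_le_one_of_conjTranspose_mul_self_eq_one {W : Matrix m n 𝕜}
    (hW : Wᴴ * W = 1) : ‖W‖ ≤ 1 := by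
  rw [l2_opNorm_def]
  refine ContinuousLinearMap.opNorm_le_bound _ zero_le_one fun x => ?_
  rw [one_mul]
  exact (norm_toEuclideanLin_of_conjTranspose_mul_self_eq_one hW x).le

theorem IsHermitian.l2_opNorm_sub_one_le {H : Matrix n n 𝕜} (hH : H.IsHermitian) {δ : ℝ}
    (hδ : 0 ≤ δ) (h : ∀ i, |hH.eigenvalues i - 1| ≤ δ) : ‖H - 1‖ ≤ δ := by
  have hsub : H - 1 = Unitary.conjStarAlgAut 𝕜 _ hH.eigenvectorUnitary
      (diagonal fun i => (hH.eigenvalues i - 1 : 𝕜)) := by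
    conv_lhs => rw [hH.spectral_theorem]
    rw [← map_one (Unitary.conjStarAlgAut 𝕜 _ hH.eigenvectorUnitary), ← map_sub,
      ← diagonal_one, diagonal_sub]
    rfl
  rw [hsub, Unitary.conjStarAlgAut_apply, ← Unitary.coe_star, CStarRing.norm_mul_coe_unitary,
    CStarRing.norm_coe_unitary_mul, l2_opNorm_diagonal]
  refine (pi_norm_le_iff_of_nonneg hδ).2 fun i => ?_
  rw [← RCLike.ofReal_one, ← RCLike.ofReal_sub, RCLike.norm_ofReal]
  exact h i

theorem PosSemidef.l2_opNorm_sub_one_le {H : Matrix n n 𝕜} (hH : H.PosSemidef) {δ : ℝ}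
    (hδ : 0 ≤ δ) (h : ∀ x, |‖toEuclideanLin H x‖ - ‖x‖| ≤ δ * ‖x‖) : ‖H - 1‖ ≤ δ := by
  refine hH.isHermitian.l2_opNorm_sub_one_le hδ fun i => ?_
  set v := hH.isHermitian.eigenvectorBasis i
  have hv : ‖v‖ = 1 := hH.isHermitian.eigenvectorBasis.orthonormal.1 i
  have hHv : toEuclideanLin H v = hH.isHermitian.eigenvalues i • v := by
    rw [toLpLin_apply, hH.isHermitian.mulVec_eigenvectorBasis]
    rfl
  simpa [hHv, norm_smul, hv, abs_of_nonneg (hH.eigenvalues_nonneg i)] using h v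

theorem PosSemidef.l2_opNorm_sub_one_le_of_mul_eq_one_add_mul [DecidableEq m]
    {H : Matrix n n 𝕜} (hH : H.PosSemidef) {V Q : Matrix m n 𝕜} {D : Matrix m m 𝕜} (hV : Vᴴ * V = 1)
    (hQ : Qᴴ * Q = 1) (hQH : Q * H = (1 + D) * V) : ‖H - 1‖ ≤ ‖D‖ := by
  refine hH.l2_opNorm_sub_one_le (norm_nonneg D) fun x => ?_
  set y := toEuclideanLin V x
  have hHx : ‖toEuclideanLin H x‖ = ‖y + toEuclideanLin D y‖ := by
    rw [← norm_toEuclideanLin_of_conjTranspose_mul_self_eq_one hQ, ← LinearMap.comp_apply,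
      ← toLpLin_mul_same, hQH, Matrix.add_mul, Matrix.one_mul, map_add, LinearMap.add_apply,
      toLpLin_mul_same, LinearMap.comp_apply]
  rw [hHx, ← norm_toEuclideanLin_of_conjTranspose_mul_self_eq_one hV x]
  calc |‖y + toEuclideanLin D y‖ - ‖y‖| ≤ ‖toEuclideanLin D y‖ := by
        simpa using abs_norm_sub_norm_le (y + toEuclideanLin D y) y
    _ ≤ ‖D‖ * ‖y‖ := l2_opNorm_mulVec D y

theorem l2_opNorm_mul_mul_le {l o : Type*} [Fintype l] [DecidableEq l] [Fintype o]
    [DecidableEq o] (A : Matrix m n 𝕜) (B : Matrix n l 𝕜) (C : Matrix l o 𝕜) :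
    ‖A * B * C‖ ≤ ‖A‖ * ‖B‖ * ‖C‖ :=
  (l2_opNorm_mul _ _).trans (by gcongr; exact l2_opNorm_mul A B)

theorem l2_opNorm_sub_le_of_mul_eq_one_add_mul [DecidableEq m] {V Q : Matrix m n 𝕜}
    {H : Matrix n n 𝕜} {D : Matrix m m 𝕜} {δ : ℝ} (hV : ‖V‖ ≤ 1) (hH : ‖H - 1‖ ≤ δ)
    (hD : ‖D‖ ≤ δ) (hδ : δ < 1) (hQH : Q * H = (1 + D) * V) :
    ‖V - Q‖ ≤ 2 * δ / (1 - δ) := by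
  have hsplit : V - Q = (V * (H - 1) - D * V) + (V - Q) * (1 - H) := by
    rw [Matrix.mul_sub, Matrix.mul_sub, Matrix.mul_one, Matrix.mul_one, Matrix.sub_mul V Q H, hQH,
      Matrix.add_mul, Matrix.one_mul]
    abel
  have hle : ‖V - Q‖ ≤ 2 * δ + ‖V - Q‖ * δ := by
    calc ‖V - Q‖ ≤ ‖V * (H - 1)‖ + ‖D * V‖ + ‖(V - Q) * (1 - H)‖ := by
          nth_rw 1 [hsplit]
          exact (norm_add_le _ _).trans (by gcongr; exact norm_sub_le _ _)
      _ ≤ ‖V‖ * ‖H - 1‖ + ‖D‖ * ‖V‖ + ‖V - Q‖ * ‖1 - H‖ := by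
          gcongr <;> exact l2_opNorm_mul _ _
      _ ≤ 1 * δ + δ * 1 + ‖V - Q‖ * δ := by
          rw [norm_sub_rev 1 H]
          gcongr
          exact (norm_nonneg D).trans hD
      _ = 2 * δ + ‖V - Q‖ * δ := by ring
  rw [le_div_iff₀ (by linarith)]
  linarith

theorem l2_opNorm_conjTranspose_mul_mul_sub_le [DecidableEq m] {V Q : Matrix m n 𝕜}
    (hV : ‖V‖ ≤ 1) (hQ : ‖Q‖ ≤ 1) (A : Matrix m m 𝕜) :
    ‖Vᴴ * A * V - Qᴴ * A * Q‖ ≤ 2 * ‖A‖ * ‖V - Q‖ := by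
  have hsplit : Vᴴ * A * V - Qᴴ * A * Q = Vᴴ * A * (V - Q) + (V - Q)ᴴ * A * Q := by
    rw [conjTranspose_sub, Matrix.mul_sub, Matrix.sub_mul, Matrix.sub_mul]
    abel
  calc ‖Vᴴ * A * V - Qᴴ * A * Q‖ ≤ ‖Vᴴ‖ * ‖A‖ * ‖V - Q‖ + ‖(V - Q)ᴴ‖ * ‖A‖ * ‖Q‖ := by
        rw [hsplit]
        exact norm_add_le_of_le (l2_opNorm_mul_mul_le _ _ _) (l2_opNorm_mul_mul_le _ _ _)
    _ ≤ 1 * ‖A‖ * ‖V - Q‖ + ‖V - Q‖ * ‖A‖ * 1 := by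
        rw [l2_opNorm_conjTranspose, l2_opNorm_conjTranspose]
        gcongr
    _ = 2 * ‖A‖ * ‖V - Q‖ := by ring

end Matrix

theorem polar_projection_bound_general (m n : ℕ)
    (V : Matrix (Fin m) (Fin n) ℂ) (hV : Vᴴ * V = 1)
    (D : Matrix (Fin m) (Fin m) ℂ) (hDnorm : specNorm D < 1)
    (Q : Matrix (Fin m) (Fin n) ℂ) (hQ : Qᴴ * Q = 1)
    (H : Matrix (Fin n) (Fin n) ℂ) (hH : H.PosSemidef) (hpolar : Q * H = (1 + D) * V)
    (A : Matrix (Fin m) (Fin m) ℂ) :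
    specNorm (Vᴴ * A * V - Qᴴ * A * Q) ≤
      4 * specNorm A * specNorm D / (1 - specNorm D) := by
  change ‖D‖ < 1 at hDnorm
  change ‖Vᴴ * A * V - Qᴴ * A * Q‖ ≤ 4 * ‖A‖ * ‖D‖ / (1 - ‖D‖)
  have hVnorm := l2_opNorm_le_one_of_conjTranspose_mul_self_eq_one hV
  have hQnorm := l2_opNorm_le_one_of_conjTranspose_mul_self_eq_one hQ
  have hHD := hH.l2_opNorm_sub_one_le_of_mul_eq_one_add_mul hV hQ hpolar
  have hVQ : ‖V - Q‖ ≤ 2 * ‖D‖ / (1 - ‖D‖) :=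
    l2_opNorm_sub_le_of_mul_eq_one_add_mul hVnorm hHD le_rfl hDnorm hpolar
  calc ‖Vᴴ * A * V - Qᴴ * A * Q‖ ≤ 2 * ‖A‖ * ‖V - Q‖ :=
        l2_opNorm_conjTranspose_mul_mul_sub_le hVnorm hQnorm A
    _ ≤ 2 * ‖A‖ * (2 * ‖D‖ / (1 - ‖D‖)) := by gcongr
    _ = 4 * ‖A‖ * ‖D‖ / (1 - ‖D‖) := by ring

/-- Let `m ≥ n ≥ 1`, let `V ∈ ℂ^{m×n}` with `V*V = I`, and let `D ∈ ℂ^{m×m}` be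
diagonal with `‖D‖₂ < 1`. If `Q` is the orthonormal polar factor of `(I+D)V` (that is, `Q*Q = I`
and `QH = (I+D)V` with `H` Hermitian positive semidefinite), then for every `A ∈ ℂ^{m×m}`,
`‖V*AV − Q*AQ‖₂ ≤ 4‖A‖₂‖D‖₂/(1 − ‖D‖₂)`. -/
theorem polar_projection_bound (m n : ℕ) (hn : 1 ≤ n) (hmn : n ≤ m)
    (V : Matrix (Fin m) (Fin n) ℂ) (hV : Vᴴ * V = 1)
    (D : Matrix (Fin m) (Fin m) ℂ) (hD : D.IsDiag) (hDnorm : specNorm D < 1)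
    (Q : Matrix (Fin m) (Fin n) ℂ) (hQ : Qᴴ * Q = 1)
    (H : Matrix (Fin n) (Fin n) ℂ) (hH : H.PosSemidef) (hpolar : Q * H = (1 + D) * V)
    (A : Matrix (Fin m) (Fin m) ℂ) :
    specNorm (Vᴴ * A * V - Qᴴ * A * Q) ≤
      4 * specNorm A * specNorm D / (1 - specNorm D) :=
  polar_projection_bound_general m n V hV D hDnorm Q hQ H hH hpolar A
end
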